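/- arXiv:quant-ph/0510028 — 2 statements merged into one kernel-verified Lean document; each statement's English description precedes it below -/
import Mathlib

section
/- In a complex inner product space, if the sesquilinear product on a symplectic ♯-space Ξ is defined by (ξ|η) = ⟨η, ξ♯⟩ + (i/2)s(η, ξ♯), where ⟨·,·⟩ is a real-symmetric positive bilinear form extended complexly and s is a skew-symmetric bilinear form satisfying ξ²η² − ⟨ξ,η⟩² ≥ (1/4)s(ξ,η)² for all real elements ξ, η, then for every η ∈ Ξ one has ‖η‖² = (η|η) ≥ 0 and ‖η‖² ≤ 2|η|², where |η|² = (Re η)² + (Im η)². -/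
/-- on a symplectic ♯-space Ξ with bilinear forms B (symmetric,
real and positive on real elements) and s (skew, real on real elements)
satisfying ξ²η² − ⟨ξ,η⟩² ≥ (1/4)s(ξ,η)², the pairing
(η|η) = ⟨η, η♯⟩ + (i/2)s(η, η♯) is real, equals |η|² + s(Re η, Im η),
is nonnegative and bounded by 2|η|², where |η|² = (Re η)² + (Im η)². -/
theorem pairing_norm_bounds
    {Ξ : Type*} [AddCommGroup Ξ] [Module ℂ Ξ]
    (sharp : Ξ → Ξ)
    (hsharp_add : ∀ x y : Ξ, sharp (x + y) = sharp x + sharp y)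
    (hsharp_smul : ∀ (c : ℂ) (x : Ξ), sharp (c • x) = (starRingEnd ℂ) c • sharp x)
    (hsharp_invol : ∀ x : Ξ, sharp (sharp x) = x)
    (B s : Ξ →ₗ[ℂ] Ξ →ₗ[ℂ] ℂ)
    (hBsymm : ∀ x y : Ξ, B x y = B y x)
    (hsskew : ∀ x y : Ξ, s x y = -s y x)
    (hBreal : ∀ x y : Ξ, sharp x = x → sharp y = y → (B x y).im = 0)
    (hsreal : ∀ x y : Ξ, sharp x = x → sharp y = y → (s x y).im = 0)
    (hBpos : ∀ x : Ξ, sharp x = x → 0 ≤ (B x x).re)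
    (hineq : ∀ x y : Ξ, sharp x = x → sharp y = y →
      (1 / 4 : ℝ) * (s x y).re ^ 2 ≤ (B x x).re * (B y y).re - (B x y).re ^ 2)
    (reP imP : Ξ → Ξ)
    (hre : ∀ η : Ξ, reP η = ((1 : ℂ) / 2) • (η + sharp η))
    (him : ∀ η : Ξ, imP η = ((1 : ℂ) / (2 * Complex.I)) • (η - sharp η)) :
    ∀ η : Ξ,
      (B η (sharp η) + (Complex.I / 2) * s η (sharp η)).im = 0 ∧
      (B η (sharp η) + (Complex.I / 2) * s η (sharp η)).re =
        ((B (reP η) (reP η)).re + (B (imP η) (imP η)).re) +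
          (s (reP η) (imP η)).re ∧
      0 ≤ (B η (sharp η) + (Complex.I / 2) * s η (sharp η)).re ∧
      (B η (sharp η) + (Complex.I / 2) * s η (sharp η)).re ≤
        2 * ((B (reP η) (reP η)).re + (B (imP η) (imP η)).re) := by
  intro η
  set a := reP η with ha_def
  set b := imP η with hb_def
  have hsub : ∀ x y : Ξ, sharp (x - y) = sharp x - sharp y := by
    intro x y
    have h := hsharp_add (x - y) y
    rw [sub_add_cancel] at h
    rw [h]; abel
  have ha : sharp a = a := by
    rw [ha_def, hre, hsharp_smul, hsharp_add, hsharp_invol]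
    simp [add_comm, map_ofNat]
  have hc : (starRingEnd ℂ) (1 / (2 * Complex.I)) = -(1 / (2 * Complex.I)) := by
    simp [map_div₀, Complex.conj_I, map_ofNat]
  have hb : sharp b = b := by
    rw [hb_def, him, hsharp_smul, hsub, hsharp_invol, hc, neg_smul, ← smul_neg, neg_sub]
  have h2I : (2 * Complex.I) ≠ 0 := by simp [Complex.I_ne_zero]
  have h1 : Complex.I * ((1:ℂ) / (2 * Complex.I)) = 1/2 := by
    field_simp
  have hη : η = a + Complex.I • b := by
    rw [ha_def, hb_def, hre, him, smul_smul, h1, smul_add, smul_sub]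
    module
  have hsη : sharp η = a - Complex.I • b := by
    conv_lhs => rw [hη]
    rw [hsharp_add, hsharp_smul, ha, hb, Complex.conj_I]
    module
  have hsaa : s a a = 0 := by
    have h := hsskew a a
    have : (2:ℂ) * s a a = 0 := by rw [two_mul]; nth_rewrite 1 [h]; ring
    simpa using this
  have hsbb : s b b = 0 := by
    have h := hsskew b b
    have : (2:ℂ) * s b b = 0 := by rw [two_mul]; nth_rewrite 1 [h]; ring
    simpa using this
  have key : B η (sharp η) + (Complex.I / 2) * s η (sharp η)
      = B a a + B b b + s a b := by
    rw [hsη]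
    conv_lhs => rw [hη]
    simp only [map_add, map_sub, map_smul, LinearMap.add_apply, LinearMap.sub_apply,
      LinearMap.smul_apply, smul_eq_mul]
    rw [hBsymm b a, hsskew b a, hsaa, hsbb]
    ring_nf
    rw [Complex.I_sq]
    ring
  have hBa := hBreal a a ha ha
  have hBb := hBreal b b hb hb
  have hS := hsreal a b ha hb
  set A := (B a a).re with hA
  set C := (B b b).re with hC
  set S := (s a b).re with hSdef
  have hre1 : (B η (sharp η) + (Complex.I / 2) * s η (sharp η)).re = A + C + S := by
    rw [key]; simp [Complex.add_re]; rfl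
  have him1 : (B η (sharp η) + (Complex.I / 2) * s η (sharp η)).im = 0 := by
    rw [key]; simp [Complex.add_im, hBa, hBb, hS]
  have hineq' := hineq a b ha hb
  have hApos := hBpos a ha
  have hCpos := hBpos b hb
  refine ⟨him1, hre1, ?_, ?_⟩
  · rw [hre1]
    nlinarith [sq_nonneg ((B a b).re), sq_nonneg (A - C), sq_nonneg (A + C + S)]
  · rw [hre1]
    nlinarith [sq_nonneg ((B a b).re), sq_nonneg (A - C), sq_nonneg (A + C - S)]
end

section
/- If α : A → A is a *-derivation of a *-algebra A, G = G* ∈ A, and λ(X) = (1/4)[G,[G,X]] + G·α(X) + α(X)·G − α²(X), then λ satisfies λ(X*X) = X*λ(X) + λ(X)*X − 2δ(X)*δ(X), where δ(X) = (1/2)[X,G] − α(X). -/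
/-- for a *-derivation α, G = G*, δ(X) = (1/2)[X,G] − α(X) and
λ(X) = (1/4)[G,[G,X]] + Gα(X) + α(X)G − α²(X), one has
λ(X*X) = X*λ(X) + λ(X)*X − 2δ(X)*δ(X). -/
theorem dissipator_identity {A : Type*} [Ring A] [Algebra ℂ A]
    [StarRing A] [StarModule ℂ A]
    (α : A →ₗ[ℂ] A)
    (hαstar : ∀ X, α (star X) = star (α X))
    (hαder : ∀ X Y, α (X * Y) = α X * Y + X * α Y)
    (G : A) (hG : star G = G)
    (δ lam : A → A)
    (hδ : ∀ X, δ X = ((1 : ℂ) / 2) • (X * G - G * X) - α X)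
    (hlam : ∀ X, lam X = ((1 : ℂ) / 4) •
        (G * (G * X - X * G) - (G * X - X * G) * G) +
      G * α X + α X * G - α (α X)) :
    ∀ X : A, lam (star X * X) =
      star X * lam X + star (lam X) * X - (2 : ℂ) • (star (δ X) * δ X) := by
  intro X
  simp only [hlam, hδ, hαder, map_add, map_sub, map_smul, hαstar, star_mul, star_sub,
    star_add, star_smul, star_star, hG, star_one, Complex.star_def, map_div₀, map_one,
    map_ofNat]
  simp only [smul_sub, smul_add, mul_add, add_mul, mul_sub, sub_mul, mul_smul_comm,
    smul_mul_assoc, smul_smul, mul_assoc]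
  module
end
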